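/- Let n ≥ 1, N = 2^n, and let I_x^{top} be the N×N complex matrix with (I_x^{top})_{lm} = 1/2 if l and m differ exactly at the most significant bit (i.e., |l - m| = N/2 with l mod (N/2) = m mod (N/2)) and 0 otherwise. Given f : Fin (N/2) → Bool, define its extension f' : Fin N → Bool by f'(j) = f(j) for 0 ≤ j ≤ N/2 - 1 and f'(j) = false for N/2 ≤ j ≤ N - 1. Then S_{I_x^{top}}(f') = ∑_{j=0}^{N/2-1} (-1)^{f(j)}. In particular, if f is balanced (takes the value true on exactly N/4 arguments... i.e., ∑_{j<N/2} (-1)^{f(j)} = 0) then S_{I_x^{top}}(f') = 0, while if f is constant then S_{I_x^{top}}(f') = ±N/2. -/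

import Mathlib

open Matrix BigOperators

/-- The sign `(-1)^{f j}` as a complex number. -/
noncomputable def signC (b : Bool) : ℂ := if b then -1 else 1

/-- `S_B(f) = ∑_{j,k} (-1)^{f j} (-1)^{f k} B_{jk}`. -/
noncomputable def Sval {N : ℕ} (B : Matrix (Fin N) (Fin N) ℂ) (f : Fin N → Bool) : ℂ :=
  ∑ j, ∑ k, signC (f j) * signC (f k) * B j k

/-- The spin operator `I_x` for the most significant bit: entry `(l,m)` is `1/2` if `l`
and `m` differ exactly at bit `n-1` (equivalently `l XOR m = 2^{n-1}`, i.e. `|l - m| = N/2`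
with `l` and `m` congruent mod `N/2`), and `0` otherwise. -/
noncomputable def IxTop (n : ℕ) : Matrix (Fin (2 ^ n)) (Fin (2 ^ n)) ℂ :=
  Matrix.of fun l m => if l.val ^^^ m.val = 2 ^ (n - 1) then (1 / 2 : ℂ) else 0

/-- The extension `f'` of `f : Fin (N/2) → Bool` to `Fin N`, with `f' j = f j` for
`j < N/2` and `f' j = false` for `N/2 ≤ j`. -/
def extFun (n : ℕ) (f : Fin (2 ^ (n - 1)) → Bool) : Fin (2 ^ n) → Bool :=
  fun j => if h : j.val < 2 ^ (n - 1) then f ⟨j.val, h⟩ else false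

/-!
`IxTop n` is half the permutation matrix of the involution `j ↦ j ^^^ 2 ^ (n - 1)`, which
swaps the two halves `j ↔ j + N/2`, so `S_{I_x^{top}}(g) = ½ ∑_j (-1)^{g j} (-1)^{g (j ^^^ N/2)}`.
For `g = f'` each pair `{j, j + N/2}` with `j < N/2` contributes `(-1)^{f j}` twice, because
`f'` is `false` on the upper half.
-/

theorem Nat.xor_two_pow_of_lt {i k : ℕ} (h : i < 2 ^ k) : i ^^^ 2 ^ k = i + 2 ^ k := by
  have hk : 0 < 2 ^ k := Nat.two_pow_pos k
  rw [← Nat.div_add_mod (i ^^^ 2 ^ k) (2 ^ k), Nat.xor_div_two_pow, Nat.xor_mod_two_pow,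
    Nat.div_eq_of_lt h, Nat.div_self hk, Nat.mod_eq_of_lt h, Nat.mod_self, Nat.xor_zero,
    Nat.zero_xor, mul_one, add_comm]

theorem Sval_eq_mul_sum_of_eq_ite {N : ℕ} {B : Matrix (Fin N) (Fin N) ℂ} {σ : Fin N → Fin N}
    {c : ℂ} (hB : ∀ j k, B j k = if k = σ j then c else 0) (g : Fin N → Bool) :
    Sval B g = c * ∑ j, signC (g j) * signC (g (σ j)) := by
  simp [Sval, hB, Finset.mul_sum, mul_comm]

def flipTop (m : ℕ) (j : Fin (2 ^ (m + 1))) : Fin (2 ^ (m + 1)) :=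
  ⟨j ^^^ 2 ^ m, Nat.xor_lt_two_pow j.isLt (Nat.pow_lt_pow_succ one_lt_two)⟩

theorem IxTop_succ_apply (m : ℕ) (j k : Fin (2 ^ (m + 1))) :
    IxTop (m + 1) j k = if k = flipTop m j then 1 / 2 else 0 := by
  have : j.val ^^^ k.val = 2 ^ m ↔ k = flipTop m j := by
    rw [xor_eq_iff_right_eq, Fin.ext_iff]
    rfl
  simp only [IxTop, Matrix.of_apply, Nat.add_sub_cancel, this]

theorem flipTop_castAdd (m : ℕ) (i : Fin (2 ^ m)) :
    flipTop m (Fin.cast (Nat.two_pow_succ m).symm (Fin.castAdd (2 ^ m) i)) =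
      Fin.cast (Nat.two_pow_succ m).symm (Fin.natAdd (2 ^ m) i) := by
  ext
  simp [flipTop, Nat.xor_two_pow_of_lt i.isLt]

theorem flipTop_natAdd (m : ℕ) (i : Fin (2 ^ m)) :
    flipTop m (Fin.cast (Nat.two_pow_succ m).symm (Fin.natAdd (2 ^ m) i)) =
      Fin.cast (Nat.two_pow_succ m).symm (Fin.castAdd (2 ^ m) i) := by
  ext
  simp [flipTop, ← Nat.xor_two_pow_of_lt i.isLt]

theorem extFun_castAdd (m : ℕ) (f : Fin (2 ^ m) → Bool) (i : Fin (2 ^ m)) :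
    extFun (m + 1) f (Fin.cast (Nat.two_pow_succ m).symm (Fin.castAdd (2 ^ m) i)) = f i := by
  simp [extFun]

theorem extFun_natAdd (m : ℕ) (f : Fin (2 ^ m) → Bool) (i : Fin (2 ^ m)) :
    extFun (m + 1) f (Fin.cast (Nat.two_pow_succ m).symm (Fin.natAdd (2 ^ m) i)) = false := by
  simp [extFun]

theorem Sval_IxTop_extFun (m : ℕ) (f : Fin (2 ^ m) → Bool) :
    Sval (IxTop (m + 1)) (extFun (m + 1) f) = ∑ j, signC (f j) := by
  rw [Sval_eq_mul_sum_of_eq_ite (IxTop_succ_apply m),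
    ← Fin.sum_congr' _ (Nat.two_pow_succ m).symm, Fin.sum_univ_add]
  simp only [flipTop_castAdd, flipTop_natAdd, extFun_castAdd, extFun_natAdd, signC,
    Bool.false_eq_true, if_false, mul_one, one_mul]
  ring

/-- `S_{I_x^{top}}(f') = ∑_{j < N/2} (-1)^{f j}`; in particular it vanishes when `f` is
balanced and equals `± N/2` when `f` is constant. -/
theorem S_IxTop_extension (n : ℕ) (hn : 1 ≤ n) (f : Fin (2 ^ (n - 1)) → Bool) :
    Sval (IxTop n) (extFun n f) = (∑ j : Fin (2 ^ (n - 1)), signC (f j)) ∧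
      ((∑ j : Fin (2 ^ (n - 1)), signC (f j)) = 0 → Sval (IxTop n) (extFun n f) = 0) ∧
      (((∀ j, f j = true) ∨ (∀ j, f j = false)) →
        Sval (IxTop n) (extFun n f) = (2 ^ (n - 1) : ℂ)
          ∨ Sval (IxTop n) (extFun n f) = -(2 ^ (n - 1) : ℂ)) := by
  obtain ⟨m, rfl⟩ : ∃ m, n = m + 1 := ⟨n - 1, by omega⟩
  have hS : Sval (IxTop (m + 1)) (extFun (m + 1) f) = ∑ j, signC (f j) :=
    Sval_IxTop_extFun m f
  refine ⟨hS, fun hbalanced => hS.trans hbalanced, ?_⟩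
  rintro (hf | hf)
  · right
    simp [hS, hf, signC]
  · left
    simp [hS, hf, signC]
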